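/- arXiv:2301.10935 — 3 statements merged into one kernel-verified Lean document; each statement's English description precedes it below -/
import Mathlib

section
/- Let A, B ⊆ ℝ[x₁,…,xₙ]. If V_ℂ(A) is totally real, then the constructible set V_ℂ(A) \ V_ℂ(B) is totally real: its Zariski closure over ℂ equals the Zariski closure over ℂ of the image in ℂⁿ of V_ℝ(A) \ V_ℝ(B). Equivalently, every p ∈ ℂ[x₁,…,xₙ] that vanishes at every point of V_ℝ(A) \ V_ℝ(B) (viewed in ℂⁿ) also vanishes at every point of V_ℂ(A) \ V_ℂ(B). -/
open MvPolynomial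

/-- Coefficientwise inclusion of real polynomials into complex polynomials. -/
noncomputable def toComplexPoly {n : ℕ} (p : MvPolynomial (Fin n) ℝ) :
    MvPolynomial (Fin n) ℂ :=
  MvPolynomial.map (algebraMap ℝ ℂ) p

/-- Coordinatewise inclusion ℝⁿ → ℂⁿ. -/
def embR {n : ℕ} (a : Fin n → ℝ) : Fin n → ℂ := fun i => (a i : ℂ)

/-- The real zero set of a set of real polynomials. -/
def zeroSetR {n : ℕ} (A : Set (MvPolynomial (Fin n) ℝ)) : Set (Fin n → ℝ) :=
  {a | ∀ p ∈ A, eval a p = 0}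

/-- The complex zero set of a set of complex polynomials. -/
def zeroSetC {n : ℕ} (A : Set (MvPolynomial (Fin n) ℂ)) : Set (Fin n → ℂ) :=
  {a | ∀ p ∈ A, eval a p = 0}

/-- The vanishing ideal (as a set) of a set of complex points. -/
def vanishingC {n : ℕ} (X : Set (Fin n → ℂ)) : Set (MvPolynomial (Fin n) ℂ) :=
  {p | ∀ a ∈ X, eval a p = 0}

lemma eval_embR {n : ℕ} (a : Fin n → ℝ) (p : MvPolynomial (Fin n) ℝ) :
    eval (embR a) (toComplexPoly p) = ((eval a p : ℝ) : ℂ) := by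
  simp only [toComplexPoly, embR, eval_map]
  have h := MvPolynomial.eval₂_comp_left (algebraMap ℝ ℂ) (RingHom.id ℝ) a p
  show eval₂ (algebraMap ℝ ℂ) (fun i => (a i : ℂ)) p = _
  simpa [Function.comp_def] using h.symm

/-- If V_ℂ(A) is totally real then the ℂ-Zariski closure of
V_ℂ(A) \ V_ℂ(B) equals the ℂ-Zariski closure of the image in ℂⁿ of V_ℝ(A) \ V_ℝ(B). -/
theorem stmt9 (n : ℕ) (A B : Set (MvPolynomial (Fin n) ℝ))
    (htr : zeroSetC (vanishingC (zeroSetC (toComplexPoly '' A) ∩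
        Set.range (embR (n := n)))) = zeroSetC (toComplexPoly '' A)) :
    zeroSetC (vanishingC (zeroSetC (toComplexPoly '' A) \ zeroSetC (toComplexPoly '' B))) =
      zeroSetC (vanishingC (embR '' (zeroSetR A \ zeroSetR B))) := by
  -- first: embR '' (V_R A \ V_R B) ⊆ V_C A \ V_C B
  have hsub : embR '' (zeroSetR A \ zeroSetR B) ⊆
      zeroSetC (toComplexPoly '' A) \ zeroSetC (toComplexPoly '' B) := by
    rintro _ ⟨a, ⟨hA, hB⟩, rfl⟩
    constructor
    · rintro _ ⟨p, hp, rfl⟩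
      rw [eval_embR]
      exact_mod_cast hA p hp
    · intro h
      apply hB
      intro q hq
      have := h (toComplexPoly q) ⟨q, hq, rfl⟩
      rw [eval_embR] at this
      exact_mod_cast this
  have hvan : vanishingC (zeroSetC (toComplexPoly '' A) \ zeroSetC (toComplexPoly '' B)) =
      vanishingC (embR '' (zeroSetR A \ zeroSetR B)) := by
    apply Set.Subset.antisymm
    · intro p hp a ha
      exact hp a (hsub ha)
    · intro p hp z hz
      obtain ⟨hzA, hzB⟩ := hz
      -- there is q in image B with eval z q ≠ 0
      simp only [zeroSetC, Set.mem_setOf_eq, not_forall] at hzB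
      obtain ⟨q, hq, hqz⟩ := hzB
      -- p * q vanishes on real points of V_C A
      have hpq : p * q ∈ vanishingC (zeroSetC (toComplexPoly '' A) ∩ Set.range embR) := by
        rintro _ ⟨hwA, a, rfl⟩
        by_cases hqa : eval (embR a) q = 0
        · simp [hqa]
        · have haB : a ∉ zeroSetR B := by
            intro haB
            obtain ⟨q₀, hq₀, rfl⟩ := hq
            apply hqa
            rw [eval_embR]
            exact_mod_cast haB q₀ hq₀
          have haA : a ∈ zeroSetR A := by
            intro r hr
            have := hwA (toComplexPoly r) ⟨r, hr, rfl⟩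
            rw [eval_embR] at this
            exact_mod_cast this
          have := hp (embR a) ⟨a, ⟨haA, haB⟩, rfl⟩
          simp [this]
      -- by htr, p * q vanishes at z
      rw [← htr] at hzA
      have := hzA (p * q) hpq
      rw [map_mul] at this
      rcases mul_eq_zero.mp this with h | h
      · exact h
      · exact absurd h hqz
  rw [hvan]
end

section
/- Fix a polynomial vector field x' = f(x) with f₁,…,fₙ ∈ ℝ[x₁,…,xₙ] and let A ⊆ ℝ[x₁,…,xₙ]. Let (L*(A)) denote the ideal of ℝ[x₁,…,xₙ] generated by all higher Lie derivatives L^{(k)}(p) for p ∈ A and k ≥ 0. Then V_ℝ((L*(A))) is invariant with respect to x' = f(x), is contained in V_ℝ(A), and contains every Zariski closed set X ⊆ V_ℝ(A) that is invariant with respect to x' = f(x). -/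
open MvPolynomial

/-- The Lie derivative of a polynomial p with respect to the polynomial vector
field x' = f(x): L(p) = Σᵢ (∂p/∂xᵢ)·fᵢ. -/
noncomputable def lieDeriv {n : ℕ} (f : Fin n → MvPolynomial (Fin n) ℝ)
    (p : MvPolynomial (Fin n) ℝ) : MvPolynomial (Fin n) ℝ :=
  ∑ i, pderiv i p * f i

/-- The ideal (L*(A)) generated by all higher Lie derivatives of elements of A. -/
noncomputable def lieStarIdeal {n : ℕ} (f : Fin n → MvPolynomial (Fin n) ℝ)
    (A : Set (MvPolynomial (Fin n) ℝ)) : Ideal (MvPolynomial (Fin n) ℝ) :=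
  Ideal.span {q | ∃ p ∈ A, ∃ k : ℕ, q = (lieDeriv f)^[k] p}

/-- Invariance of a set of real points under the flow of x' = f(x). -/
def IsInvariantSet {n : ℕ} (f : Fin n → MvPolynomial (Fin n) ℝ)
    (X : Set (Fin n → ℝ)) : Prop :=
  ∀ x₀ ∈ X, ∀ D : Set ℝ, IsOpen D → D.OrdConnected → (0 : ℝ) ∈ D →
    ∀ φ : ℝ → (Fin n → ℝ), φ 0 = x₀ →
      (∀ t ∈ D, HasDerivAt φ (fun i => eval (φ t) (f i)) t) →
      ∀ t ∈ D, 0 ≤ t → φ t ∈ X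

open Set

/-- Chain rule for polynomial evaluation along a differentiable curve. -/
lemma hasDerivAt_eval_curve {n : ℕ} (p : MvPolynomial (Fin n) ℝ)
    {φ : ℝ → Fin n → ℝ} {φ' : Fin n → ℝ} {t : ℝ} (hφ : HasDerivAt φ φ' t) :
    HasDerivAt (fun s => eval (φ s) p) (∑ i, eval (φ t) (pderiv i p) * φ' i) t := by
  induction p using MvPolynomial.induction_on with
  | C a =>
      simp only [eval_C, pderiv_C, map_zero, zero_mul, Finset.sum_const_zero]
      exact hasDerivAt_const t a
  | add p q hp hq =>
      simp only [map_add, add_mul, Finset.sum_add_distrib]; exact hp.add hq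
  | mul_X p i hp =>
      have hXi : HasDerivAt (fun s => φ s i) (φ' i) t := hasDerivAt_pi.mp hφ i
      have : HasDerivAt (fun s => eval (φ s) p * φ s i) _ t := hp.mul hXi
      simp only [eval_mul, eval_X] at this ⊢
      convert this using 1
      simp only [pderiv_mul, pderiv_X, map_add, map_mul, eval_X, add_mul,
        Finset.sum_add_distrib, Finset.sum_mul]
      congr 1
      · exact Finset.sum_congr rfl fun j _ => by ring
      · rw [Finset.sum_eq_single i]
        · simp
        · intro j _ hj; simp [Pi.single_eq_of_ne hj.symm]
        · simp

/-- Chain rule with the Lie derivative, along a solution of the ODE. -/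
lemma hasDerivAt_eval_lie {n : ℕ} (f : Fin n → MvPolynomial (Fin n) ℝ)
    (p : MvPolynomial (Fin n) ℝ) {φ : ℝ → Fin n → ℝ} {t : ℝ}
    (hφ : HasDerivAt φ (fun i => eval (φ t) (f i)) t) :
    HasDerivAt (fun s => eval (φ s) p) (eval (φ t) (lieDeriv f p)) t := by
  have h := hasDerivAt_eval_curve p hφ
  have e : eval (φ t) (lieDeriv f p) = ∑ i, eval (φ t) (pderiv i p) * eval (φ t) (f i) := by
    simp [lieDeriv, map_sum]
  rw [e]
  exact h

lemma lieDeriv_add {n : ℕ} (f : Fin n → MvPolynomial (Fin n) ℝ)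
    (p q : MvPolynomial (Fin n) ℝ) :
    lieDeriv f (p + q) = lieDeriv f p + lieDeriv f q := by
  simp [lieDeriv, map_add, add_mul, Finset.sum_add_distrib]

lemma lieDeriv_mul {n : ℕ} (f : Fin n → MvPolynomial (Fin n) ℝ)
    (p q : MvPolynomial (Fin n) ℝ) :
    lieDeriv f (p * q) = lieDeriv f p * q + p * lieDeriv f q := by
  unfold lieDeriv
  rw [Finset.sum_mul, Finset.mul_sum, ← Finset.sum_add_distrib]
  exact Finset.sum_congr rfl fun i _ => by rw [pderiv_mul]; ring

lemma lieDeriv_mem {n : ℕ} (f : Fin n → MvPolynomial (Fin n) ℝ)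
    (A : Set (MvPolynomial (Fin n) ℝ)) {q : MvPolynomial (Fin n) ℝ}
    (hq : q ∈ lieStarIdeal f A) : lieDeriv f q ∈ lieStarIdeal f A := by
  refine Submodule.span_induction ?_ ?_ ?_ ?_ hq
  · rintro x ⟨p, hp, k, rfl⟩
    exact Ideal.subset_span ⟨p, hp, k + 1, (Function.iterate_succ_apply' _ _ _).symm⟩
  · simp [lieDeriv]
  · intro x y _ _ hx hy
    rw [lieDeriv_add]
    exact add_mem hx hy
  · intro a x hx h
    rw [smul_eq_mul, lieDeriv_mul]
    exact add_mem (Ideal.mul_mem_left _ _ hx) (Ideal.mul_mem_left _ _ h)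

lemma eval_zero_of_span {n : ℕ} {S : Set (MvPolynomial (Fin n) ℝ)} {a : Fin n → ℝ}
    (h : ∀ q ∈ S, eval a q = 0) {p : MvPolynomial (Fin n) ℝ}
    (hp : p ∈ Ideal.span S) : eval a p = 0 := by
  refine Submodule.span_induction (fun q hq => h q hq) (map_zero _) ?_ ?_ hp
  · intro x y _ _ hx hy; simp [map_add, hx, hy]
  · intro r x _ hx; simp [smul_eq_mul, map_mul, hx]

lemma contDiff_field {n : ℕ} (f : Fin n → MvPolynomial (Fin n) ℝ) :
    ContDiff ℝ 1 (fun y : Fin n → ℝ => fun i => eval y (f i)) :=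
  contDiff_pi.mpr fun i => (AnalyticOnNhd.eval_mvPolynomial (f i)).contDiff

lemma continuous_eval_poly {n : ℕ} (p : MvPolynomial (Fin n) ℝ) :
    Continuous (fun x : Fin n → ℝ => eval x p) :=
  ((AnalyticOnNhd.eval_mvPolynomial p).contDiff (n := 1)).continuous

lemma invariant_zeroSet_lieStar {n : ℕ} (f : Fin n → MvPolynomial (Fin n) ℝ)
    (A : Set (MvPolynomial (Fin n) ℝ)) :
    IsInvariantSet f (zeroSetR (↑(lieStarIdeal f A) : Set (MvPolynomial (Fin n) ℝ))) := by
  intro x₀ hx₀ D hD hDc hD0 φ hφ0 hφ' t htD ht0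
  set I := lieStarIdeal f A with hIdef
  obtain ⟨s, hs⟩ : I.FG := IsNoetherian.noetherian I
  have hsubI : ∀ q ∈ s, q ∈ I := fun q hq => hs ▸ Ideal.subset_span hq
  -- coefficients expressing Lie derivatives of generators in terms of generators
  have hcoef : ∀ j : ↥s, ∃ c : ↥s → MvPolynomial (Fin n) ℝ,
      lieDeriv f (j : MvPolynomial (Fin n) ℝ) = ∑ k : ↥s, c k * (k : MvPolynomial (Fin n) ℝ) := by
    intro j
    have hmem : lieDeriv f (j : MvPolynomial (Fin n) ℝ) ∈ Ideal.span (↑s : Set _) := by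
      rw [hs]; exact lieDeriv_mem f A (hsubI j j.2)
    obtain ⟨c', -, hc'⟩ := Submodule.mem_span_finset.mp hmem
    refine ⟨fun k => c' k, ?_⟩
    rw [← hc', Finset.univ_eq_attach, ← Finset.sum_attach s (fun i => c' i • i)]
    simp [smul_eq_mul]
  choose c hc using hcoef
  -- the interval [0,t] sits inside D
  have hIcc : Icc (0:ℝ) t ⊆ D := hDc.out hD0 htD
  have hφcont : ContinuousOn φ D := fun u hu => (hφ' u hu).continuousAt.continuousWithinAt
  -- clamping map
  set ψ : ℝ → ℝ := fun u => max 0 (min u t) with hψdef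
  have hψmem : ∀ u, ψ u ∈ Icc (0:ℝ) t := fun u =>
    ⟨le_max_left _ _, max_le ht0 (min_le_right _ _)⟩
  have hψid : ∀ u ∈ Icc (0:ℝ) t, ψ u = u := by
    intro u hu
    simp only [hψdef]
    rw [min_eq_left hu.2, max_eq_right hu.1]
  have hψcont : Continuous ψ := continuous_const.max (continuous_id.min continuous_const)
  have hΦcont : Continuous (fun u => φ (ψ u)) := by
    rw [continuous_iff_continuousAt]
    intro u
    exact ((hφ' (ψ u) (hIcc (hψmem u))).continuousAt).comp hψcont.continuousAt
  -- a uniform bound on the coefficient functions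
  have hFcont : ContinuousOn (fun v => fun jk : ↥s × ↥s => eval (φ v) (c jk.1 jk.2))
      (Icc (0:ℝ) t) := by
    apply continuousOn_pi.mpr
    intro jk
    exact (continuous_eval_poly _).comp_continuousOn (hφcont.mono hIcc)
  obtain ⟨C, hC⟩ := isCompact_Icc.exists_bound_of_continuousOn hFcont
  have hC0 : 0 ≤ C := le_trans (norm_nonneg _) (hC 0 ⟨le_refl _, ht0⟩)
  have hCb : ∀ (j k : ↥s), ∀ v ∈ Icc (0:ℝ) t, |eval (φ v) (c j k)| ≤ C := by
    intro j k v hv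
    calc |eval (φ v) (c j k)| = ‖(fun jk : ↥s × ↥s => eval (φ v) (c jk.1 jk.2)) (j, k)‖ := by
          simp [Real.norm_eq_abs]
      _ ≤ ‖fun jk : ↥s × ↥s => eval (φ v) (c jk.1 jk.2)‖ :=
          norm_le_pi_norm (fun jk : ↥s × ↥s => eval (φ v) (c jk.1 jk.2)) (j, k)
      _ ≤ C := hC v hv
  -- the linear vector field
  set v : ℝ → (↥s → ℝ) → (↥s → ℝ) :=
    fun u y j => ∑ k, eval (φ (ψ u)) (c j k) * y k with hvdef
  set K : NNReal := Real.toNNReal ((s.card : ℝ) * C) with hKdef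
  have hKcoe : (K : ℝ) = (s.card : ℝ) * C := Real.coe_toNNReal _ (by positivity)
  have hlip : ∀ u, LipschitzWith K (v u) := by
    intro u
    apply LipschitzWith.of_dist_le_mul
    intro y z
    rw [dist_pi_le_iff (by positivity)]
    intro j
    rw [Real.dist_eq]
    have e : v u y j - v u z j = ∑ k, eval (φ (ψ u)) (c j k) * (y k - z k) := by
      simp only [hvdef, ← Finset.sum_sub_distrib, mul_sub]
    rw [e]
    calc |∑ k, eval (φ (ψ u)) (c j k) * (y k - z k)|
        ≤ ∑ k, |eval (φ (ψ u)) (c j k) * (y k - z k)| := Finset.abs_sum_le_sum_abs _ _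
      _ ≤ ∑ _k : ↥s, C * dist y z := by
          refine Finset.sum_le_sum fun k _ => ?_
          rw [abs_mul]
          refine mul_le_mul (hCb j k _ (hψmem u)) ?_ (abs_nonneg _) hC0
          rw [← Real.dist_eq]
          exact dist_le_pi_dist y z k
      _ = (K : ℝ) * dist y z := by
          rw [Finset.sum_const, nsmul_eq_mul, hKcoe, Finset.card_univ, Fintype.card_coe]
          ring
  -- the solution g and the zero solution
  set g : ℝ → (↥s → ℝ) := fun u j => eval (φ u) (j : MvPolynomial (Fin n) ℝ) with hgdef
  have hgcont : ContinuousOn g (Icc (0:ℝ) t) := by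
    apply continuousOn_pi.mpr
    intro j
    exact (continuous_eval_poly _).comp_continuousOn (hφcont.mono hIcc)
  have hg' : ∀ u ∈ Ico (0:ℝ) t, HasDerivWithinAt g (v u (g u)) (Ici u) u := by
    intro u hu
    have huIcc : u ∈ Icc (0:ℝ) t := Ico_subset_Icc_self hu
    have huD : u ∈ D := hIcc huIcc
    have hder : HasDerivAt g (fun j : ↥s => eval (φ u) (lieDeriv f (j : MvPolynomial (Fin n) ℝ))) u :=
      hasDerivAt_pi.mpr fun j => hasDerivAt_eval_lie f _ (hφ' u huD)
    have e : (fun j : ↥s => eval (φ u) (lieDeriv f (j : MvPolynomial (Fin n) ℝ))) = v u (g u) := by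
      funext j
      rw [hc j]
      simp [hvdef, hgdef, map_sum, hψid u huIcc]
    rw [e] at hder
    exact hder.hasDerivWithinAt
  have hz' : ∀ u ∈ Ico (0:ℝ) t,
      HasDerivWithinAt (fun _ : ℝ => (0 : ↥s → ℝ)) (v u 0) (Ici u) u := by
    intro u _
    have : v u 0 = 0 := by funext j; simp [hvdef]
    rw [this]
    exact (hasDerivAt_const u _).hasDerivWithinAt
  have hg0 : g 0 = 0 := by
    funext j
    have : (j : MvPolynomial (Fin n) ℝ) ∈ I := hsubI j j.2
    simpa [hgdef, hφ0] using hx₀ _ this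
  have hdist := dist_le_of_trajectories_ODE hlip hgcont hg'
    (continuousOn_const) hz' (by rw [hg0]) t ⟨ht0, le_refl t⟩
  have hgt : g t = 0 := by
    have h2 := hdist
    rw [dist_self, zero_mul] at h2
    exact dist_le_zero.mp h2
  -- conclude
  intro p hp
  have hpI : p ∈ I := hp
  rw [← hs] at hpI
  refine eval_zero_of_span ?_ hpI
  intro q hq
  have := congrFun hgt ⟨q, hq⟩
  simpa [hgdef] using this

/-- If `q` vanishes on an invariant set `X`, so does its Lie derivative. -/
lemma lieDeriv_vanish {n : ℕ} (f : Fin n → MvPolynomial (Fin n) ℝ)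
    {X : Set (Fin n → ℝ)} (hXinv : IsInvariantSet f X)
    {q : MvPolynomial (Fin n) ℝ} (hq : ∀ x ∈ X, eval x q = 0) :
    ∀ x ∈ X, eval x (lieDeriv f q) = 0 := by
  intro x hx
  obtain ⟨φ, hφ0, ε, hε, hφ'⟩ :=
    ContDiffAt.exists_forall_mem_closedBall_exists_eq_forall_mem_Ioo_hasDerivAt₀ (E := Fin n → ℝ) (x₀ := x) (contDiff_field f).contDiffAt 0
  have h0mem : (0 : ℝ) ∈ Ioo (0 - ε) (0 + ε) := by constructor <;> simp [hε]
  have hmemX : ∀ u ∈ Ico (0:ℝ) ε, φ u ∈ X := by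
    intro u hu
    refine hXinv x hx (Ioo (0 - ε) (0 + ε)) isOpen_Ioo (ordConnected_Ioo) h0mem φ hφ0
      (fun v hv => hφ' v hv) u ?_ hu.1
    constructor
    · linarith [hu.1]
    · linarith [hu.2]
  set g : ℝ → ℝ := fun u => eval (φ u) q with hgdef
  have h1 : HasDerivAt g (eval x (lieDeriv f q)) 0 := by
    have := hasDerivAt_eval_lie f q (hφ' 0 h0mem)
    rwa [hφ0] at this
  have h2 : HasDerivWithinAt g 0 (Ici (0:ℝ)) 0 := by
    have hev : g =ᶠ[nhdsWithin 0 (Ici (0:ℝ))] fun _ => (0:ℝ) := by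
      filter_upwards [Ico_mem_nhdsGE_of_mem (by exact ⟨le_refl _, hε⟩ : (0:ℝ) ∈ Ico 0 ε)]
        with u hu
      exact hq _ (hmemX u hu)
    have hg0 : g 0 = 0 := by
      rw [hgdef]; simp only [hφ0]; exact hq x hx
    exact (hasDerivWithinAt_const 0 _ (0:ℝ)).congr_of_eventuallyEq hev hg0
  have hu : UniqueDiffWithinAt ℝ (Ici (0:ℝ)) 0 := uniqueDiffOn_Ici 0 0 Set.self_mem_Ici
  have e1 := (h1.hasDerivWithinAt (s := Ici (0:ℝ))).derivWithin hu
  have e2 := h2.derivWithin hu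
  rw [← e1, e2]

/-- V_ℝ((L*(A))) is invariant, is contained in V_ℝ(A), and contains
every invariant Zariski closed subset of V_ℝ(A). -/
theorem stmt13 (n : ℕ) (f : Fin n → MvPolynomial (Fin n) ℝ)
    (A : Set (MvPolynomial (Fin n) ℝ)) :
    IsInvariantSet f (zeroSetR (↑(lieStarIdeal f A) : Set (MvPolynomial (Fin n) ℝ))) ∧
    zeroSetR (↑(lieStarIdeal f A) : Set (MvPolynomial (Fin n) ℝ)) ⊆ zeroSetR A ∧
    ∀ X : Set (Fin n → ℝ),
      (∃ B : Set (MvPolynomial (Fin n) ℝ), X = zeroSetR B) →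
      IsInvariantSet f X → X ⊆ zeroSetR A →
      X ⊆ zeroSetR (↑(lieStarIdeal f A) : Set (MvPolynomial (Fin n) ℝ)) := by
  refine ⟨invariant_zeroSet_lieStar f A, ?_, ?_⟩
  · intro a ha p hp
    exact ha p (Ideal.subset_span ⟨p, hp, 0, rfl⟩)
  · intro X _ hXinv hXA
    have hiter : ∀ k : ℕ, ∀ p ∈ A, ∀ x ∈ X, eval x ((lieDeriv f)^[k] p) = 0 := by
      intro k
      induction k with
      | zero => intro p hp x hx; exact hXA hx p hp
      | succ k ih =>
          intro p hp x hx
          rw [Function.iterate_succ_apply']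
          exact lieDeriv_vanish f hXinv (fun y hy => ih p hp y hy) x hx
    intro x₀ hx₀ p hp
    refine eval_zero_of_span ?_ (show p ∈ lieStarIdeal f A from hp)
    rintro q ⟨p', hp', k, rfl⟩
    exact hiter k p' hp' x₀ hx₀
end

section
/- Define T : ℕ × ℕ → ℕ recursively by T(d,0) = d and T(d,k+1) = F_{2·T(d,k)+1} · T(d,k), where F_j is the j-th Fibonacci number (F₀ = 0, F₁ = 1, F_{j+2} = F_{j+1} + F_j). Define tower(0,t) = t and tower(h+1,t) = 2^{tower(h,t)}, and set Tower(d,1) = 2^{3d+1} and Tower(d,n) = tower(n, 3d+n+1) for n ≥ 2. Define R(d,n)₀ = T(d,n), R(d,n)_{k+1} = T(d + R(d,n)_k, n), and R(d,n) = R(d,n)_n, and define RTower(d,n) = tower(n(n−1), Tower(d,2n)). Then for all natural numbers d, n ≥ 1, R(d,n) < RTower(d,n). -/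
/-- The degree bound T(d,k) for `Triangulate`: T(d,0) = d and
T(d,k+1) = F_{2·T(d,k)+1} · T(d,k), where F_j is the j-th Fibonacci number. -/
def T (d : ℕ) : ℕ → ℕ
  | 0 => d
  | k + 1 => Nat.fib (2 * T d k + 1) * T d k

/-- tower(h,t): an exponent tower of h copies of 2 topped by t. -/
def tower : ℕ → ℕ → ℕ
  | 0, t => t
  | h + 1, t => 2 ^ tower h t

/-- Tower(d,1) = 2^{3d+1}; Tower(d,n) = tower(n, 3d+n+1) for n ≥ 2. -/
def Tower (d n : ℕ) : ℕ := if n = 1 then 2 ^ (3 * d + 1) else tower n (3 * d + n + 1)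

/-- R(d,n)_k: the intermediate degree bounds for RGA_o:
R(d,n)₀ = T(d,n) and R(d,n)_{k+1} = T(d + R(d,n)_k, n). -/
def Raux (d n : ℕ) : ℕ → ℕ
  | 0 => T d n
  | k + 1 => T (d + Raux d n k) n

/-- R(d,n) = R(d,n)_n: the degree bound for RGA_o. -/
def R (d n : ℕ) : ℕ := Raux d n n

/-- RTower(d,n): an exponent tower of n(n−1) copies of 2 topped by Tower(d,2n). -/
def RTower (d n : ℕ) : ℕ := tower (n * (n - 1)) (Tower d (2 * n))

lemma fib_le_pow : ∀ m, Nat.fib (m + 1) ≤ 2 ^ m := by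
  intro m
  induction m using Nat.strong_induction_on with
  | _ m ih =>
    match m with
    | 0 => simp
    | 1 => simp [Nat.fib]
    | (j+2) =>
      have h1 := ih j (by omega)
      have h2 := ih (j+1) (by omega)
      have e3 : j + 2 + 1 = j + 1 + 2 := by omega
      rw [e3, Nat.fib_add_two]
      have e1 : (2:ℕ)^(j+1) = 2 * 2^j := by ring
      have e2 : (2:ℕ)^(j+2) = 4 * 2^j := by ring
      omega

lemma two_mul_le_pow : ∀ t : ℕ, 2 * (t + 1) ≤ 2 ^ (t + 1) := by
  intro t
  induction t with
  | zero => simp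
  | succ t ih =>
    have h2 : (2:ℕ) ≤ 2 ^ (t+1) := Nat.one_lt_two_pow_iff.mpr (by omega)
    have e : (2:ℕ)^(t+2) = 2^(t+1) + 2^(t+1) := by ring
    omega

lemma two_mul_le_pow' {t : ℕ} (ht : 1 ≤ t) : 2 * t ≤ 2 ^ t := by
  obtain ⟨s, rfl⟩ : ∃ s, t = s + 1 := ⟨t - 1, by omega⟩
  exact two_mul_le_pow s

lemma four_mul_le_pow : ∀ m, 4 ≤ m → 4 * m ≤ 2 ^ m := by
  intro m hm
  induction m with
  | zero => omega
  | succ m ih =>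
    rcases Nat.lt_or_ge m 4 with h | h
    · interval_cases m <;> simp_all
    · have h1 := ih (by omega)
      have h2 : (4:ℕ) ≤ 2 ^ m := le_trans (by omega) h1
      have e : (2:ℕ)^(m+1) = 2^m + 2^m := by ring
      omega

lemma tower_add : ∀ a b c : ℕ, tower (a + b) c = tower a (tower b c) := by
  intro a b c
  induction a with
  | zero => simp [tower]
  | succ a ih =>
    have : a + 1 + b = (a + b) + 1 := by omega
    rw [this]
    simp [tower, ih]

lemma tower_mono {b b' : ℕ} (k : ℕ) (h : b ≤ b') : tower k b ≤ tower k b' := by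
  induction k with
  | zero => simpa [tower]
  | succ k ih => exact Nat.pow_le_pow_right (by norm_num) ih

lemma self_le_tower (k b : ℕ) : b ≤ tower k b := by
  induction k with
  | zero => simp [tower]
  | succ k ih =>
    refine le_trans ih ?_
    exact le_of_lt (Nat.lt_two_pow_self)

lemma T_pos {x : ℕ} (hx : 1 ≤ x) : ∀ k, 1 ≤ T x k := by
  intro k
  induction k with
  | zero => simpa [T]
  | succ k ih =>
    show 1 ≤ Nat.fib (2 * T x k + 1) * T x k
    have hf : 1 ≤ Nat.fib (2 * T x k + 1) := Nat.fib_pos.mpr (by omega)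
    exact Nat.one_le_iff_ne_zero.mpr (Nat.mul_ne_zero (by omega) (by omega))

lemma T_key {x : ℕ} (hx : 1 ≤ x) (k : ℕ) :
    2 * T x (k + 1) ≤ 2 ^ (3 * T x k) := by
  have hT := T_pos hx k
  have hf : Nat.fib (2 * T x k + 1) ≤ 2 ^ (2 * T x k) := fib_le_pow _
  have h2 : 2 * T x k ≤ 2 ^ (T x k) := two_mul_le_pow' hT
  calc 2 * T x (k + 1) = 2 ^ (2 * T x k) * (2 * T x k) -
        (2 ^ (2 * T x k) - Nat.fib (2 * T x k + 1)) * (2 * T x k) + 0 := by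
        show 2 * (Nat.fib (2 * T x k + 1) * T x k) = _
        have := Nat.mul_le_mul_right (2 * T x k) hf
        rw [Nat.sub_mul]
        have e : Nat.fib (2 * T x k + 1) * (2 * T x k) = 2 * (Nat.fib (2 * T x k + 1) * T x k) := by ring
        omega
    _ ≤ 2 ^ (2 * T x k) * (2 * T x k) := by omega
    _ ≤ 2 ^ (2 * T x k) * 2 ^ (T x k) := Nat.mul_le_mul_left _ h2
    _ = 2 ^ (3 * T x k) := by rw [← pow_add]; ring_nf

lemma T_tower {x : ℕ} (hx : 1 ≤ x) : ∀ k, 3 * T x k + 1 ≤ tower k (3 * x + k + 1) := by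
  intro k
  induction k with
  | zero => simp [T, tower]
  | succ k ih =>
    have hT := T_pos hx k
    have hK := T_key hx k
    show 3 * T x (k+1) + 1 ≤ 2 ^ (tower k (3 * x + (k+1) + 1))
    have hM : tower k (3 * x + k + 1) ≤ tower k (3 * x + (k+1) + 1) :=
      tower_mono k (by omega)
    have h1 : 3 * T x k + 1 ≤ tower k (3 * x + (k+1) + 1) := le_trans ih hM
    -- 2 * (3 * T x (k+1) + 1) ≤ 2 ^ (3 * T x k + 1) * 2
    have h2 : (2:ℕ) ≤ 2 ^ (3 * T x k) := le_trans (by omega) (Nat.le_of_lt (Nat.lt_two_pow_self)) |>.trans (le_refl _) |>.trans (le_refl _)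
    have h2' : (2:ℕ) ≤ 2 ^ (3 * T x k) := by
      calc (2:ℕ) = 2 ^ 1 := by norm_num
        _ ≤ 2 ^ (3 * T x k) := Nat.pow_le_pow_right (by norm_num) (by omega)
    have h3 : 2 * (3 * T x (k+1) + 1) ≤ 2 ^ (3 * T x k + 2) := by
      have e : (2:ℕ) ^ (3 * T x k + 2) = 2 ^ (3 * T x k) + 2 ^ (3 * T x k) + 2 * 2 ^ (3 * T x k) := by ring
      omega
    have h4 : (2:ℕ) ^ (3 * T x k + 2) ≤ 2 ^ (tower k (3 * x + (k+1) + 1) + 1) :=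
      Nat.pow_le_pow_right (by norm_num) (by omega)
    have e2 : (2:ℕ) ^ (tower k (3 * x + (k+1) + 1) + 1) = 2 * 2 ^ (tower k (3 * x + (k+1) + 1)) := by ring
    omega

lemma T_tower' {x k b : ℕ} (hx : 1 ≤ x) (hk : 1 ≤ k) (hb : 3 * x + k + 1 ≤ b) :
    3 * T x k + b ≤ tower k b := by
  obtain ⟨j, rfl⟩ : ∃ j, k = j + 1 := ⟨k - 1, by omega⟩
  set M := tower j b with hM
  have h1 : 3 * T x j + 1 ≤ tower j (3 * x + j + 1) := T_tower hx j
  have h2 : tower j (3 * x + j + 1) ≤ M := tower_mono j (by omega)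
  have h3 : 3 * T x j + 1 ≤ M := le_trans h1 h2
  have hK := T_key hx j
  -- 4 * T x (j+1) ≤ 2 ^ M
  have h4 : 4 * T x (j + 1) ≤ 2 ^ M := by
    have : (2:ℕ) ^ (3 * T x j + 1) ≤ 2 ^ M := Nat.pow_le_pow_right (by norm_num) (by omega)
    have e : (2:ℕ) ^ (3 * T x j + 1) = 2 * 2 ^ (3 * T x j) := by ring
    omega
  have hbM : b ≤ M := self_le_tower j b
  have hM5 : 5 ≤ M := le_trans (by omega) hbM
  have h4b : 4 * M ≤ 2 ^ M := four_mul_le_pow M (by omega)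
  have goal2 : 4 * (3 * T x (j+1) + b) ≤ 4 * 2 ^ M := by omega
  have : 3 * T x (j+1) + b ≤ 2 ^ M := by omega
  simpa [tower] using this

lemma Raux_tower {d n : ℕ} (hd : 1 ≤ d) (hn : 1 ≤ n) :
    ∀ k, 3 * Raux d n k + (3 * d + n + 1) ≤ tower (n * (k + 1)) (3 * d + 2 * n + 1) := by
  intro k
  induction k with
  | zero =>
    show 3 * T d n + (3 * d + n + 1) ≤ tower (n * 1) (3 * d + 2 * n + 1)
    rw [Nat.mul_one]
    have := T_tower' (x := d) (k := n) (b := 3 * d + 2 * n + 1) hd hn (by omega)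
    omega
  | succ k ih =>
    set b := tower (n * (k + 1)) (3 * d + 2 * n + 1) with hb
    set y := d + Raux d n k with hy
    have hyb : 3 * y + n + 1 ≤ b := by omega
    have h1 : 3 * T y n + b ≤ tower n b := T_tower' (by omega) hn hyb
    have h2 : tower n b = tower (n * (k + 2)) (3 * d + 2 * n + 1) := by
      rw [hb, ← tower_add]
      congr 1
      ring
    have hBb : 3 * d + 2 * n + 1 ≤ b := self_le_tower _ _
    show 3 * T y n + (3 * d + n + 1) ≤ tower (n * (k + 2)) (3 * d + 2 * n + 1)
    rw [← h2]
    omega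

/-- Explicit bounds on degree complexity of RGA_o:
for all natural numbers d, n ≥ 1, R(d,n) < RTower(d,n). -/
theorem stmt19 : ∀ d n : ℕ, 1 ≤ d → 1 ≤ n → R d n < RTower d n := by
  intro d n hd hn
  have hC := Raux_tower hd hn n
  obtain ⟨m, rfl⟩ : ∃ m, n = m + 1 := ⟨n - 1, by omega⟩
  have hT2 : Tower d (2 * (m + 1)) = tower (2 * (m + 1)) (3 * d + 2 * (m + 1) + 1) := by
    rw [Tower, if_neg (by omega)]
  have hRT : RTower d (m + 1) = tower ((m + 1) * ((m + 1) + 1)) (3 * d + 2 * (m + 1) + 1) := by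
    rw [RTower, hT2, ← tower_add]
    congr 1
    simp [Nat.add_sub_cancel]
    ring
  rw [hRT]
  have : R d (m + 1) = Raux d (m + 1) (m + 1) := rfl
  omega
end
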